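/- arXiv:2004.13092 — 6 statements merged into one kernel-verified Lean document; each statement's English description precedes it below -/
import Mathlib

section
/- Let A be a unital C*-algebra, let D ∈ A be self-adjoint, let a ∈ A be invertible, set g := ‖a⁻¹‖⁻¹, and let κ > 0. Let L_κ be the self-adjoint element of the C*-algebra M₂(A) of 2×2 matrices over A given by L_κ = [[κD, a], [a*, −κD]]. Then L_κ² ≥ (g² − κ‖Da − aD‖)·1 in M₂(A). In particular, if κ‖Da − aD‖ < g², then L_κ is invertible. -/
/-!
With `c = κ(Da − aD)` one computes `L_κ² = [[κ²D² + aa*, c], [c*, κ²D² + a*a]]`, and both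
diagonal entries are `≥ g²`: conjugating `b*b ≤ ‖b‖²` for `b = a⁻¹` by `a` gives
`1 ≤ ‖a⁻¹‖² a*a`. A block matrix `[[p, c], [c*, q]]` with `p, q ≥ t ≥ ‖c‖` is positive: for
`t > 0` it is `Y*Y + diag(p − t, q − c*c/t)` with `Y = [[√t, c/√t], [0, 0]]`, and `c*c ≤ t²`.
Hence `L_κ² ≥ g² − ‖c‖` in the C*-algebra `CStarMatrix (Fin 2) (Fin 2) A`, where the positive
elements are exactly the `y*y`; when `g² − ‖c‖ > 0` this makes `L_κ²`, hence `L_κ`, invertible.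
-/

open Matrix

/-- The odd spectral localizer `L_κ = [[κD, a], [a*, −κD]]` as a 2×2 matrix over a
unital C*-algebra. -/
noncomputable def oddLocalizer {A : Type*} [CStarAlgebra A] (κ : ℝ) (D a : A) :
    Matrix (Fin 2) (Fin 2) A :=
  !![κ • D, a; star a, -(κ • D)]

section SpectralGap

variable {A : Type*} [CStarAlgebra A] [PartialOrder A] [StarOrderedRing A]

lemma norm_inverse_inv_sq_smul_one_le_star_mul_self {a : A} (ha : IsUnit a) :
    ‖Ring.inverse a‖⁻¹ ^ 2 • (1 : A) ≤ star a * a := by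
  set b := Ring.inverse a
  have key : (1 : A) ≤ ‖b‖ ^ 2 • (star a * a) :=
    calc (1 : A) = star (b * a) * (b * a) := by
          rw [Ring.inverse_mul_cancel a ha, star_one, one_mul]
      _ = star a * (star b * b) * a := by simp only [star_mul, mul_assoc]
      _ ≤ star a * (‖b‖ ^ 2 • 1) * a := by
          refine star_left_conjugate_le_conjugate ?_ a
          simpa [Algebra.algebraMap_eq_smul_one] using CStarAlgebra.star_mul_le_algebraMap_norm_sq
      _ = ‖b‖ ^ 2 • (star a * a) := by simp
  rcases (norm_nonneg b).eq_or_lt with hb | hb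
  · simp [← hb, star_mul_self_nonneg]
  · calc ‖b‖⁻¹ ^ 2 • (1 : A) ≤ ‖b‖⁻¹ ^ 2 • ‖b‖ ^ 2 • (star a * a) :=
          smul_le_smul_of_nonneg_left key (by positivity)
      _ = star a * a := by rw [smul_smul, ← mul_pow, inv_mul_cancel₀ hb.ne', one_pow, one_smul]

lemma norm_inverse_inv_sq_smul_one_le_mul_star_self {a : A} (ha : IsUnit a) :
    ‖Ring.inverse a‖⁻¹ ^ 2 • (1 : A) ≤ a * star a := by
  simpa [Ring.inverse_star, norm_star] using
    norm_inverse_inv_sq_smul_one_le_star_mul_self ha.star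

end SpectralGap

-- Stated over an abstract `B`: for `B = CStarMatrix n n A` instance search picks the entrywise
-- `ℂ`-algebra structure, and then fails to find the real functional calculus.
lemma CStarAlgebra.exists_eq_star_mul_self_of_nonneg {B : Type*} [CStarAlgebra B] [PartialOrder B]
    [StarOrderedRing B] {x : B} (hx : 0 ≤ x) : ∃ y, x = star y * y :=
  CStarAlgebra.nonneg_iff_eq_star_mul_self.1 hx

namespace CStarMatrix

lemma ofMatrix_fin_two_sub_smul_one {A R : Type*} [Ring A] [SMulZeroClass R A]
    (p c d q : A) (r : R) :
    ofMatrix !![p, c; d, q] - r • 1 = ofMatrix !![p - r • 1, c; d, q - r • 1] := by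
  ext i j; fin_cases i <;> fin_cases j <;> simp

section NonUnitalRing

variable {A : Type*} [NonUnitalRing A]

lemma star_ofMatrix_fin_two [StarRing A] (w x y z : A) :
    star (ofMatrix !![w, x; y, z]) = ofMatrix !![star w, star y; star x, star z] := by
  ext i j; fin_cases i <;> fin_cases j <;> rfl

lemma ofMatrix_mul_fin_two (a₁₁ a₁₂ a₂₁ a₂₂ b₁₁ b₁₂ b₂₁ b₂₂ : A) :
    ofMatrix !![a₁₁, a₁₂; a₂₁, a₂₂] * ofMatrix !![b₁₁, b₁₂; b₂₁, b₂₂] =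
      ofMatrix !![a₁₁ * b₁₁ + a₁₂ * b₂₁, a₁₁ * b₁₂ + a₁₂ * b₂₂;
        a₂₁ * b₁₁ + a₂₂ * b₂₁, a₂₁ * b₁₂ + a₂₂ * b₂₂] :=
  Matrix.mul_fin_two ..

end NonUnitalRing

variable {A : Type*} [CStarAlgebra A] [PartialOrder A] [StarOrderedRing A]

lemma ofMatrix_diag_fin_two_nonneg {x y : A} (hx : 0 ≤ x) (hy : 0 ≤ y) :
    0 ≤ ofMatrix !![x, 0; 0, y] := by
  have hroot : ofMatrix !![x, 0; 0, y] = star (ofMatrix !![CFC.sqrt x, 0; 0, CFC.sqrt y]) *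
      ofMatrix !![CFC.sqrt x, 0; 0, CFC.sqrt y] := by
    simp [star_ofMatrix_fin_two, ofMatrix_mul_fin_two, (CFC.sqrt_nonneg x).isSelfAdjoint.star_eq,
      (CFC.sqrt_nonneg y).isSelfAdjoint.star_eq, CFC.sqrt_mul_sqrt_self, hx, hy]
  rw [hroot]
  exact star_mul_self_nonneg _

lemma ofMatrix_fin_two_nonneg_of_norm_le {p q c : A} {t : ℝ} (hc : ‖c‖ ≤ t)
    (hp : t • 1 ≤ p) (hq : t • 1 ≤ q) : 0 ≤ ofMatrix !![p, c; star c, q] := by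
  rcases (norm_nonneg c |>.trans hc).eq_or_lt with ht | ht
  · obtain rfl : c = 0 := norm_le_zero_iff.1 (ht ▸ hc)
    simp only [← ht, zero_smul] at hp hq
    simpa using ofMatrix_diag_fin_two_nonneg hp hq
  set s := √t
  have hs : s * s = t := Real.mul_self_sqrt ht.le
  have hs0 : s ≠ 0 := (Real.sqrt_pos.2 ht).ne'
  have hcc : t⁻¹ • (star c * c) ≤ t • 1 :=
    calc t⁻¹ • (star c * c) ≤ t⁻¹ • (t ^ 2 • 1 : A) := by
          refine smul_le_smul_of_nonneg_left ?_ (inv_nonneg.2 ht.le)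
          refine CStarAlgebra.star_mul_le_algebraMap_norm_sq.trans ?_
          rw [Algebra.algebraMap_eq_smul_one]
          exact smul_le_smul_of_nonneg_right (pow_le_pow_left₀ (norm_nonneg c) hc 2) zero_le_one
      _ = t • 1 := by rw [smul_smul]; field_simp
  have hsplit : ofMatrix !![p, c; star c, q] =
      star (ofMatrix !![s • 1, s⁻¹ • c; 0, 0]) * ofMatrix !![s • 1, s⁻¹ • c; 0, 0] +
        ofMatrix !![p - t • 1, 0; 0, q - t⁻¹ • (star c * c)] := by
    rw [star_ofMatrix_fin_two, ofMatrix_mul_fin_two]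
    simp [smul_smul, hs0, ← mul_inv, hs]
  rw [hsplit]
  exact add_nonneg (star_mul_self_nonneg _)
    (ofMatrix_diag_fin_two_nonneg (sub_nonneg.2 hp) (sub_nonneg.2 (hcc.trans hq)))

lemma smul_one_le_ofMatrix_fin_two {p q c : A} {r : ℝ} (hp : r • 1 ≤ p) (hq : r • 1 ≤ q) :
    (r - ‖c‖) • 1 ≤ ofMatrix !![p, c; star c, q] := by
  have hsub {x : A} (hx : r • 1 ≤ x) : ‖c‖ • 1 ≤ x - (r - ‖c‖) • 1 := by
    rwa [le_sub_iff_add_le, ← add_smul, add_sub_cancel]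
  rw [← sub_nonneg, ofMatrix_fin_two_sub_smul_one]
  exact ofMatrix_fin_two_nonneg_of_norm_le le_rfl (hsub hp) (hsub hq)

end CStarMatrix

lemma oddLocalizer_mul_self {A : Type*} [CStarAlgebra A] {D : A} (hD : IsSelfAdjoint D)
    (κ : ℝ) (a : A) :
    oddLocalizer κ D a * oddLocalizer κ D a =
      !![κ ^ 2 • (D * D) + a * star a, κ • (D * a - a * D);
        star (κ • (D * a - a * D)), κ ^ 2 • (D * D) + star a * a] := by
  rw [oddLocalizer, Matrix.mul_fin_two]
  congr 1; simp [star_smul, hD.star_eq, pow_two, smul_smul, sub_eq_add_neg, add_comm]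

/-- Quadratic lower bound for the odd spectral localizer: for `D` self-adjoint, `a`
invertible with spectral gap `g = ‖a⁻¹‖⁻¹`, and `κ > 0`, one has
`L_κ² ≥ (g² − κ‖[D,a]‖)·1` in `M₂(A)` (positivity being expressed as being of the
form `star y * y`); in particular, if `κ‖[D,a]‖ < g²`, then `L_κ` is invertible. -/
theorem oddLocalizer_sq_ge (A : Type*) [CStarAlgebra A] (D a : A)
    (hD : IsSelfAdjoint D) (ha : IsUnit a) (κ : ℝ) (hκ : 0 < κ) :
    (∃ y : Matrix (Fin 2) (Fin 2) A,
      oddLocalizer κ D a * oddLocalizer κ D a -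
          ((‖Ring.inverse a‖⁻¹ ^ 2 - κ * ‖D * a - a * D‖) • (1 : Matrix (Fin 2) (Fin 2) A)) =
        star y * y) ∧
    (κ * ‖D * a - a * D‖ < ‖Ring.inverse a‖⁻¹ ^ 2 → IsUnit (oddLocalizer κ D a)) := by
  let _ : PartialOrder A := CStarAlgebra.spectralOrder A
  have _ : StarOrderedRing A := CStarAlgebra.spectralOrderedRing A
  set L := oddLocalizer κ D a
  have hnorm : κ * ‖D * a - a * D‖ = ‖κ • (D * a - a * D)‖ := by
    rw [norm_smul, Real.norm_of_nonneg hκ.le]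
  have hD2 : 0 ≤ κ ^ 2 • (D * D) := by
    simpa [star_smul, hD.star_eq, pow_two, smul_smul] using star_mul_self_nonneg (κ • D)
  have hbound : (‖Ring.inverse a‖⁻¹ ^ 2 - κ * ‖D * a - a * D‖) • 1 ≤
      CStarMatrix.ofMatrix (L * L) := by
    rw [hnorm, oddLocalizer_mul_self hD]
    exact CStarMatrix.smul_one_le_ofMatrix_fin_two
      (le_add_of_nonneg_of_le hD2 (norm_inverse_inv_sq_smul_one_le_mul_star_self ha))
      (le_add_of_nonneg_of_le hD2 (norm_inverse_inv_sq_smul_one_le_star_mul_self ha))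
  refine ⟨CStarAlgebra.exists_eq_star_mul_self_of_nonneg (sub_nonneg.2 hbound), fun hgap => ?_⟩
  have hLL : IsUnit (CStarMatrix.ofMatrix L * CStarMatrix.ofMatrix L) :=
    CStarAlgebra.isUnit_of_le _ hbound (isStrictlyPositive_one.smul (sub_pos.2 hgap))
  exact isUnit_mul_self_iff.1 hLL
end

section
/- Let A be a unital C*-algebra, let γ ∈ A be a self-adjoint unitary, let D ∈ A be self-adjoint with Dγ = −γD, and let k ∈ A be self-adjoint and invertible with kγ = γk. Set g := ‖k⁻¹‖⁻¹ and let κ > 0 satisfy κ‖Dk − kD‖ < g². Then for every t ∈ [0,1], the self-adjoint element kγ + tκD satisfies (kγ + tκD)² ≥ (g² − κ‖Dk − kD‖)·1; in particular kγ + tκD is invertible. -/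
/-!
Expanding with `γ² = 1`, `kγ = γk` and `Dγ = -γD` gives
`(kγ + sD)² = k² + s [D,k] γ + s² D²`. Conjugating `k⁻² ≤ ‖k⁻¹‖²` by `k` gives
`k² ≥ ‖k⁻¹‖⁻²`; the element `[D,k] γ` is self-adjoint of norm `‖[D,k]‖` because `γ` is unitary,
so it is at least `-‖[D,k]‖`; and `D² ≥ 0`. Hence the square is bounded below by a positive
multiple of `1`, which makes it, and so `kγ + sD`, invertible.
-/

section Grading

variable {R : Type*} [Ring R] {γ D k : R}

theorem mul_commutator_eq_neg_commutator_mul (hDγ : D * γ = -(γ * D)) (hkγ : k * γ = γ * k) :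
    γ * (D * k - k * D) = -((D * k - k * D) * γ) := by
  have hγD : γ * D = -(D * γ) := by rw [hDγ, neg_neg]
  rw [mul_sub, ← mul_assoc, hγD, neg_mul, mul_assoc, ← hkγ, ← mul_assoc γ k D, ← hkγ, mul_assoc,
    hγD]
  noncomm_ring

theorem mul_add_smul_sq {S : Type*} [CommRing S] [Algebra S R] (hγ2 : γ * γ = 1)
    (hDγ : D * γ = -(γ * D)) (hkγ : k * γ = γ * k) (s : S) :
    (k * γ + s • D) ^ 2 = k * k + s • ((D * k - k * D) * γ) + (s * s) • (D * D) := by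
  have hkγkγ : k * γ * (k * γ) = k * k := by
    rw [mul_assoc, ← mul_assoc γ, ← hkγ, mul_assoc, hγ2, mul_one]
  have hkγD : k * γ * D = -(k * D * γ) := by
    rw [mul_assoc, ← neg_eq_iff_eq_neg.mpr hDγ, mul_neg, mul_assoc]
  rw [sq, sub_mul]
  simp only [mul_add, add_mul, smul_mul_assoc, mul_smul_comm, hkγkγ, hkγD, mul_assoc]
  module

theorem IsSelfAdjoint.commutator_mul [StarRing R] (hγ : IsSelfAdjoint γ) (hD : IsSelfAdjoint D)
    (hk : IsSelfAdjoint k) (hDγ : D * γ = -(γ * D)) (hkγ : k * γ = γ * k) :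
    IsSelfAdjoint ((D * k - k * D) * γ) := by
  have hc : star (D * k - k * D) = -(D * k - k * D) := by
    rw [star_sub, star_mul, star_mul, hD.star_eq, hk.star_eq, neg_sub]
  rw [IsSelfAdjoint, star_mul, hγ.star_eq, hc, mul_neg,
    mul_commutator_eq_neg_commutator_mul hDγ hkγ, neg_neg]

end Grading

section CStarAlgebra

variable {A : Type*} [CStarAlgebra A] [PartialOrder A] [StarOrderedRing A]

theorem IsSelfAdjoint.inv_norm_ringInverse_sq_smul_one_le_mul_self {k : A}
    (hk : IsSelfAdjoint k) : ‖Ring.inverse k‖⁻¹ ^ 2 • (1 : A) ≤ k * k := by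
  set b := Ring.inverse k
  have hb_sa : IsSelfAdjoint b := hk.ringInverse
  -- `‖b‖ = 0` covers non-invertible `k`, for which `Ring.inverse k = 0`.
  rcases (norm_nonneg b).eq_or_lt with hb0 | hb
  · simpa [← hb0, hk.star_eq] using star_mul_self_nonneg k
  have hk' : IsUnit k := by
    by_contra h
    simp [b, Ring.inverse_non_unit _ h] at hb
  have hbb : b * b ≤ ‖b‖ ^ 2 • (1 : A) := by
    simpa [hb_sa.star_eq, Algebra.algebraMap_eq_smul_one]
      using CStarAlgebra.star_mul_le_algebraMap_norm_sq (a := b)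
  have hconj : (1 : A) ≤ ‖b‖ ^ 2 • (k * k) := by
    have hbk : b * k = 1 := Ring.inverse_mul_cancel k hk'
    have hkb : k * b = 1 := Ring.mul_inverse_cancel k hk'
    have := hk.conjugate_le_conjugate hbb
    rwa [show k * (b * b) * k = (k * b) * (b * k) by noncomm_ring, hkb, hbk, mul_one,
      mul_smul_comm, mul_one, smul_mul_assoc] at this
  calc ‖b‖⁻¹ ^ 2 • (1 : A) ≤ ‖b‖⁻¹ ^ 2 • ‖b‖ ^ 2 • (k * k) := by gcongr
    _ = k * k := by rw [smul_smul, ← mul_pow, inv_mul_cancel₀ hb.ne', one_pow, one_smul]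

theorem sub_smul_one_le_mul_add_smul_sq {γ D k : A} (hγ : IsSelfAdjoint γ) (hγ2 : γ * γ = 1)
    (hD : IsSelfAdjoint D) (hDγ : D * γ = -(γ * D)) (hk : IsSelfAdjoint k)
    (hkγ : k * γ = γ * k) {s : ℝ} (hs : 0 ≤ s) :
    (‖Ring.inverse k‖⁻¹ ^ 2 - s * ‖D * k - k * D‖) • (1 : A) ≤ (k * γ + s • D) ^ 2 := by
  have hγu : γ ∈ unitary A :=
    Unitary.mem_iff.mpr ⟨by rw [hγ.star_eq, hγ2], by rw [hγ.star_eq, hγ2]⟩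
  have hcross : -(‖D * k - k * D‖ • (1 : A)) ≤ (D * k - k * D) * γ := by
    simpa [CStarRing.norm_mul_mem_unitary _ hγu, Algebra.algebraMap_eq_smul_one]
      using (hγ.commutator_mul hD hk hDγ hkγ).neg_algebraMap_norm_le_self
  have hDD : (0 : A) ≤ D * D := by simpa [hD.star_eq] using star_mul_self_nonneg D
  rw [mul_add_smul_sq hγ2 hDγ hkγ, sub_smul, sub_eq_add_neg, ← smul_smul, ← smul_neg]
  calc _ ≤ k * k + s • ((D * k - k * D) * γ) := by
        gcongr
        exact hk.inv_norm_ringInverse_sq_smul_one_le_mul_self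
    _ ≤ _ := le_add_of_nonneg_right (smul_nonneg (mul_self_nonneg s) hDD)

theorem isUnit_of_smul_one_le {a : A} {r : ℝ} (hr : 0 < r) (h : r • (1 : A) ≤ a) : IsUnit a :=
  CStarAlgebra.isUnit_of_le _ h <| by
    rw [← Algebra.algebraMap_eq_smul_one]
    exact isStrictlyPositive_algebraMap hr

end CStarAlgebra

theorem evenLocalizer_path_invertible_general (A : Type*) [CStarAlgebra A]
    [PartialOrder A] [StarOrderedRing A] (γ D k : A)
    (hγ : star γ = γ) (hγ2 : γ * γ = 1) (hD : IsSelfAdjoint D)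
    (hDγ : D * γ = -(γ * D)) (hk : IsSelfAdjoint k)
    (hkγ : k * γ = γ * k) (κ : ℝ) (hκ : 0 < κ)
    (hsmall : κ * ‖D * k - k * D‖ < ‖Ring.inverse k‖⁻¹ ^ 2) :
    ∀ t ∈ Set.Icc (0 : ℝ) 1,
      IsSelfAdjoint (k * γ + (t * κ) • D) ∧
      (‖Ring.inverse k‖⁻¹ ^ 2 - κ * ‖D * k - k * D‖) • (1 : A) ≤ (k * γ + (t * κ) • D) ^ 2 ∧
      IsUnit (k * γ + (t * κ) • D) := by
  rintro t ⟨ht0, ht1⟩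
  have hs : 0 ≤ t * κ := mul_nonneg ht0 hκ.le
  have hbound : (‖Ring.inverse k‖⁻¹ ^ 2 - κ * ‖D * k - k * D‖) • (1 : A)
      ≤ (k * γ + (t * κ) • D) ^ 2 := by
    refine le_trans ?_ (sub_smul_one_le_mul_add_smul_sq hγ hγ2 hD hDγ hk hkγ hs)
    gcongr
    exact mul_le_of_le_one_left hκ.le ht1
  refine ⟨?_, hbound, ?_⟩
  · exact ((hk.commute_iff hγ).mp hkγ).add ((IsSelfAdjoint.all _).smul hD)
  · exact (isUnit_pow_iff two_ne_zero).mp (isUnit_of_smul_one_le (sub_pos.mpr hsmall) hbound)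

/-- The straight-line path from `kγ` to the even spectral localizer `κD + kγ` stays in
the invertibles for small `κ`: if `γ` is a self-adjoint unitary, `D` self-adjoint with
`Dγ = −γD`, `k` self-adjoint invertible with `kγ = γk`, `g = ‖k⁻¹‖⁻¹` and
`κ‖[D,k]‖ < g²`, then for every `t ∈ [0,1]` the self-adjoint element `kγ + tκD`
satisfies `(kγ + tκD)² ≥ (g² − κ‖[D,k]‖)·1` and is invertible. -/
theorem evenLocalizer_path_invertible (A : Type*) [CStarAlgebra A]
    [PartialOrder A] [StarOrderedRing A] (γ D k : A)
    (hγ : star γ = γ) (hγ2 : γ * γ = 1) (hD : IsSelfAdjoint D)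
    (hDγ : D * γ = -(γ * D)) (hk : IsSelfAdjoint k) (hk' : IsUnit k)
    (hkγ : k * γ = γ * k) (κ : ℝ) (hκ : 0 < κ)
    (hsmall : κ * ‖D * k - k * D‖ < ‖Ring.inverse k‖⁻¹ ^ 2) :
    ∀ t ∈ Set.Icc (0 : ℝ) 1,
      IsSelfAdjoint (k * γ + (t * κ) • D) ∧
      (‖Ring.inverse k‖⁻¹ ^ 2 - κ * ‖D * k - k * D‖) • (1 : A) ≤ (k * γ + (t * κ) • D) ^ 2 ∧
      IsUnit (k * γ + (t * κ) • D) :=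
  evenLocalizer_path_invertible_general A γ D k hγ hγ2 hD hDγ hk hkγ κ hκ hsmall
end

section
/- Let A be a unital C*-algebra, let X ∈ A be self-adjoint and invertible, and set |X| := (X²)^{1/2}. Let Y ∈ A satisfy ‖ |X|^{−1/2} Y |X|^{−1/2} ‖ < 1. Then X + Y is invertible in A. -/
/-!
Conjugation by `√c` with `c = |X|⁻¹` is invertible, sends `X` to `sgn X = X|X|⁻¹`, a self-adjoint
unitary, and `Y` to an element of norm `< 1`. A unitary `U` plus `v` with `‖v‖ < 1` is invertible,
since `U + v = U (1 + U⋆v)` and `‖U⋆v‖ = ‖v‖`, so the Neumann series applies.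
-/

open CFC Ring

theorem Unitary.isUnit_add_of_norm_lt_one {E : Type*} [NormedRing E] [StarRing E] [CStarRing E]
    [HasSummableGeomSeries E] {U v : E} (hU : U ∈ unitary E) (hv : ‖v‖ < 1) :
    IsUnit (U + v) := by
  have hfactor : U + v = U * (1 - -(star U * v)) := by
    rw [sub_neg_eq_add, mul_add, mul_one, ← mul_assoc, Unitary.mul_star_self_of_mem hU, one_mul]
  rw [hfactor]
  refine (Unitary.toUnits ⟨U, hU⟩).isUnit.mul (isUnit_one_sub_of_norm_lt_one ?_)
  rwa [norm_neg, CStarRing.norm_mem_unitary_mul _ (Unitary.star_mem hU)]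

theorem Commute.ringInverse_right {M₀ : Type*} [MonoidWithZero M₀] {a b : M₀} (h : Commute a b)
    (hb : IsUnit b) : Commute a b⁻¹ʳ := by
  obtain ⟨u, rfl⟩ := hb
  rw [Ring.inverse_unit]
  exact h.units_inv_right

namespace CFC

variable {A : Type*} [PartialOrder A] [Ring A] [StarRing A] [TopologicalSpace A]
  [StarOrderedRing A] [Algebra ℝ A] [ContinuousFunctionalCalculus ℝ A IsSelfAdjoint]
  [NonnegSpectrumClass ℝ A] [IsTopologicalRing A] [T2Space A]

lemma isStrictlyPositive_abs {a : A} (ha : IsUnit a) : IsStrictlyPositive (abs a) :=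
  IsStrictlyPositive.sqrt _ <| (ha.star.mul ha).isStrictlyPositive (star_mul_self_nonneg a)

lemma isUnit_conjSqrt_iff {c : A} (hc : IsStrictlyPositive c) {a : A} :
    IsUnit (conjSqrt c a) ↔ IsUnit a := by
  have hs : IsUnit (sqrt c) := hc.sqrt.isUnit
  rw [conjSqrt_apply, hs.mul_right_iff, hs.mul_left_iff]

lemma conjSqrt_ringInverse_abs_mem_unitary {X : A} (hX : IsSelfAdjoint X) (hXu : IsUnit X) :
    conjSqrt (abs X)⁻¹ʳ X ∈ unitary A := by
  have habs := isStrictlyPositive_abs hXu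
  have hXB : Commute X (abs X)⁻¹ʳ := (commute_abs_self X).symm.ringInverse_right habs.isUnit
  have hXBX : X * (abs X)⁻¹ʳ * X = abs X := by
    have hXX : X * X = abs X * abs X := by rw [abs_mul_abs, hX.star_eq]
    rw [hXB.eq, mul_assoc, hXX, ← mul_assoc, inverse_mul_cancel _ habs.isUnit, one_mul]
  set S := sqrt (abs X)⁻¹ʳ
  have hSS : S * S = (abs X)⁻¹ʳ := sqrt_mul_sqrt_self _ habs.ringInverse.nonneg
  have hsq : conjSqrt (abs X)⁻¹ʳ X * conjSqrt (abs X)⁻¹ʳ X = 1 := by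
    calc S * X * S * (S * X * S) = S * (X * (S * S) * X) * S := by simp only [mul_assoc]
      _ = conjSqrt (abs X)⁻¹ʳ (abs X) := by rw [hSS, hXBX, conjSqrt_apply]
      _ = 1 := conjSqrt_ringInverse_self _
  have hsa : IsSelfAdjoint (conjSqrt (abs X)⁻¹ʳ X) :=
    hX.conjugate_self (IsSelfAdjoint.of_nonneg (sqrt_nonneg _))
  have hunit : IsUnit (conjSqrt (abs X)⁻¹ʳ X) := (isUnit_conjSqrt_iff habs.ringInverse).mpr hXu
  exact hunit.mem_unitary_of_star_mul_self (by rw [hsa.star_eq, hsq])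

end CFC

/-- Relative-bound invertibility lemma: if `X` is self-adjoint and invertible with
`|X| = (X²)^{1/2}`, and `Y` satisfies `‖|X|^{−1/2} Y |X|^{−1/2}‖ < 1`, then `X + Y`
is invertible. Here `|X|^{−1/2}` is realized as `(|X|⁻¹)^{1/2}` via the continuous
functional calculus. -/
theorem add_isUnit_of_rel_bound (A : Type*) [CStarAlgebra A]
    [PartialOrder A] [StarOrderedRing A] (X Y : A)
    (hX : IsSelfAdjoint X) (hX' : IsUnit X)
    (hY : ‖CFC.sqrt (Ring.inverse (CFC.sqrt (X ^ 2))) * Y *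
        CFC.sqrt (Ring.inverse (CFC.sqrt (X ^ 2)))‖ < 1) :
    IsUnit (X + Y) := by
  have habs : CFC.sqrt (X ^ 2) = CFC.abs X := by rw [CFC.abs, hX.star_eq, sq]
  rw [habs, ← conjSqrt_apply] at hY
  have hc := (isStrictlyPositive_abs hX').ringInverse
  rw [← isUnit_conjSqrt_iff hc, map_add]
  exact Unitary.isUnit_add_of_norm_lt_one (conjSqrt_ringInverse_abs_mem_unitary hX hX') hY
end

section
/- Let A be a unital C*-algebra, let P ∈ A be a projection and write P̄ := 1 − P. Let L ∈ A be self-adjoint and suppose there are α, β > 0 with (P L P)² ≥ α² P and (P̄ L P̄)² ≥ β² P̄, and that the off-diagonal part Y := P L P̄ + P̄ L P satisfies ‖Y‖² < α β. Then L is invertible in A. -/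
/-!
Conjugating `L` by the invertible element `D = √β P + √α (1 - P)` rescales its diagonal blocks
to `X = β PLP + α (1-P)L(1-P)`, with `X² ≥ (αβ)²`, and its off-diagonal part `Y` to `√(αβ) Y`,
of norm squared `αβ ‖Y‖² < (αβ)²`. A self-adjoint `x` with `x² ≥ c` stays invertible under a
self-adjoint perturbation `y` with `‖y‖² < c`: expanding `0 ≤ t⁻¹ (t x + y)²` gives
`(x + y)² ≥ (1 - t) x² + (1 - t⁻¹) y² ≥ (1 - t) c + (1 - t⁻¹) ‖y‖²`, which is positive for
`‖y‖² / c < t < 1`.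
-/

section BlockScalar

variable {𝕜 R : Type*} [CommRing 𝕜] [Ring R] [Algebra 𝕜 R]

def blockScalar (P : R) (a b : 𝕜) : R := a • P + b • (1 - P)

theorem blockScalar_one_one (P : R) : blockScalar P (1 : 𝕜) 1 = 1 := by
  simp [blockScalar]

theorem IsIdempotentElem.blockScalar_mul_blockScalar {P : R} (hP : IsIdempotentElem P)
    (a b c d : 𝕜) : blockScalar P a b * blockScalar P c d = blockScalar P (a * c) (b * d) := by
  simp only [blockScalar, mul_add, add_mul, smul_mul_smul, hP.eq, hP.one_sub.eq,
    hP.mul_one_sub_self, hP.one_sub_mul_self, smul_zero, add_zero, zero_add]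

theorem IsIdempotentElem.isUnit_blockScalar {P : R} (hP : IsIdempotentElem P) {a b : 𝕜}
    (ha : IsUnit a) (hb : IsUnit b) : IsUnit (blockScalar P a b) :=
  isUnit_iff_exists.mpr ⟨blockScalar P ((ha.unit⁻¹ : 𝕜ˣ) : 𝕜) ((hb.unit⁻¹ : 𝕜ˣ) : 𝕜),
    by rw [hP.blockScalar_mul_blockScalar, ha.mul_val_inv, hb.mul_val_inv, blockScalar_one_one],
    by rw [hP.blockScalar_mul_blockScalar, ha.val_inv_mul, hb.val_inv_mul, blockScalar_one_one]⟩

theorem blockScalar_mul_mul_blockScalar (P L : R) (a b : 𝕜) :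
    blockScalar P a b * L * blockScalar P a b =
      (a * a) • (P * L * P) + (b * b) • ((1 - P) * L * (1 - P)) +
        (a * b) • (P * L * (1 - P) + (1 - P) * L * P) := by
  simp only [blockScalar, mul_add, add_mul, smul_mul_assoc, mul_smul_comm, smul_add, smul_smul]
  module

end BlockScalar

theorem IsSelfAdjoint.mul_mul_add_mul_mul {R : Type*} [NonUnitalSemiring R] [StarRing R]
    {L P Q : R} (hL : IsSelfAdjoint L) (hP : IsSelfAdjoint P) (hQ : IsSelfAdjoint Q) :
    IsSelfAdjoint (P * L * Q + Q * L * P) := by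
  convert IsSelfAdjoint.add_star_self (P * L * Q) using 2
  simp only [star_mul, hL.star_eq, hP.star_eq, hQ.star_eq, mul_assoc]

theorem IsIdempotentElem.algebraMap_le_sq_smul_add_smul {A : Type*} [Ring A] [PartialOrder A]
    [IsOrderedAddMonoid A] [Algebra ℝ A] [PosSMulMono ℝ A] {P L : A} (hP : IsIdempotentElem P)
    {α β : ℝ} (h1 : α ^ 2 • P ≤ (P * L * P) ^ 2)
    (h2 : β ^ 2 • (1 - P) ≤ ((1 - P) * L * (1 - P)) ^ 2) :
    algebraMap ℝ A ((α * β) ^ 2) ≤ (β • (P * L * P) + α • ((1 - P) * L * (1 - P))) ^ 2 := by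
  have hPQ : P * L * P * ((1 - P) * L * (1 - P)) = 0 := by
    simp only [mul_assoc, ← mul_assoc P (1 - P), hP.mul_one_sub_self, zero_mul, mul_zero]
  have hQP : (1 - P) * L * (1 - P) * (P * L * P) = 0 := by
    simp only [mul_assoc, ← mul_assoc (1 - P) P, hP.one_sub_mul_self, zero_mul, mul_zero]
  calc algebraMap ℝ A ((α * β) ^ 2) = β ^ 2 • (α ^ 2 • P) + α ^ 2 • (β ^ 2 • (1 - P)) := by
        rw [Algebra.algebraMap_eq_smul_one]
        module
    _ ≤ β ^ 2 • (P * L * P) ^ 2 + α ^ 2 • ((1 - P) * L * (1 - P)) ^ 2 :=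
        add_le_add (smul_le_smul_of_nonneg_left h1 (sq_nonneg β))
          (smul_le_smul_of_nonneg_left h2 (sq_nonneg α))
    _ = (β • (P * L * P) + α • ((1 - P) * L * (1 - P))) ^ 2 := by
        simp only [sq, mul_add, add_mul, smul_mul_smul, hPQ, hQP, smul_zero, add_zero, zero_add]

theorem IsSelfAdjoint.smul_sq_add_smul_sq_le {A : Type*} [Ring A] [StarRing A]
    [PartialOrder A] [StarOrderedRing A] [Algebra ℝ A] [StarModule ℝ A] [PosSMulMono ℝ A]
    {x y : A} (hx : IsSelfAdjoint x) (hy : IsSelfAdjoint y) {t : ℝ} (ht : 0 < t) :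
    (1 - t) • x ^ 2 + (1 - t⁻¹) • y ^ 2 ≤ (x + y) ^ 2 := by
  have hsq : 0 ≤ t⁻¹ • (t • x + y) ^ 2 :=
    smul_nonneg (inv_nonneg.mpr ht.le) (((IsSelfAdjoint.all t).smul hx).add hy).sq_nonneg
  rw [← sub_nonneg]
  convert hsq using 1
  simp only [sq, mul_add, add_mul, smul_mul_assoc, mul_smul_comm, smul_add, smul_smul]
  match_scalars <;> field_simp <;> ring

theorem IsSelfAdjoint.isUnit_add_of_algebraMap_le_sq {A : Type*} [CStarAlgebra A]
    [PartialOrder A] [StarOrderedRing A] {x y : A} (hx : IsSelfAdjoint x) (hy : IsSelfAdjoint y)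
    {c : ℝ} (hc : algebraMap ℝ A c ≤ x ^ 2) (hyc : ‖y‖ ^ 2 < c) : IsUnit (x + y) := by
  have hyy : y ^ 2 ≤ algebraMap ℝ A (‖y‖ ^ 2) := by
    simpa only [hy.star_eq, sq] using CStarAlgebra.star_mul_le_algebraMap_norm_sq (a := y)
  have hc0 : 0 < c := (sq_nonneg _).trans_lt hyc
  obtain ⟨t, hyt, ht1⟩ := exists_between ((div_lt_one hc0).mpr hyc)
  have ht : 0 < t := (div_nonneg (sq_nonneg _) hc0.le).trans_lt hyt
  have hε : 0 < (1 - t) * c + (1 - t⁻¹) * ‖y‖ ^ 2 := by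
    rw [div_lt_iff₀ hc0] at hyt
    have : (1 - t) * c + (1 - t⁻¹) * ‖y‖ ^ 2 = (1 - t) * (t * c - ‖y‖ ^ 2) / t := by
      field_simp
      ring
    rw [this]
    exact div_pos (mul_pos (by linarith) (by linarith)) ht
  have hsq : algebraMap ℝ A ((1 - t) * c + (1 - t⁻¹) * ‖y‖ ^ 2) ≤ (x + y) ^ 2 :=
    calc algebraMap ℝ A ((1 - t) * c + (1 - t⁻¹) * ‖y‖ ^ 2)
        = (1 - t) • algebraMap ℝ A c + (1 - t⁻¹) • algebraMap ℝ A (‖y‖ ^ 2) := by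
          simp only [map_add, map_mul, Algebra.smul_def]
      _ ≤ (1 - t) • x ^ 2 + (1 - t⁻¹) • y ^ 2 :=
          add_le_add (smul_le_smul_of_nonneg_left hc (sub_nonneg.mpr ht1.le))
            (smul_le_smul_of_nonpos_left hyy (sub_nonpos.mpr ((one_le_inv₀ ht).mpr ht1.le)))
      _ ≤ (x + y) ^ 2 := hx.smul_sq_add_smul_sq_le hy ht
  exact (isUnit_pow_iff two_ne_zero).mp
    (CStarAlgebra.isUnit_of_le _ hsq (isStrictlyPositive_algebraMap hε))

/-- Block-decoupling invertibility criterion: let `P` be a projection in a unital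
C*-algebra, `L` self-adjoint, and suppose `(PLP)² ≥ α²P`, `((1−P)L(1−P))² ≥ β²(1−P)`
for some `α, β > 0`, while the off-diagonal part `Y = PL(1−P) + (1−P)LP` satisfies
`‖Y‖² < αβ`. Then `L` is invertible. -/
theorem isUnit_of_block_decoupling (A : Type*) [CStarAlgebra A]
    [PartialOrder A] [StarOrderedRing A] (P L : A)
    (hP : star P = P) (hP2 : P * P = P) (hL : IsSelfAdjoint L)
    (α β : ℝ) (hα : 0 < α) (hβ : 0 < β)
    (h1 : α ^ 2 • P ≤ (P * L * P) ^ 2)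
    (h2 : β ^ 2 • ((1 : A) - P) ≤ ((1 - P) * L * (1 - P)) ^ 2)
    (hY : ‖P * L * (1 - P) + (1 - P) * L * P‖ ^ 2 < α * β) :
    IsUnit L := by
  have hPp : IsStarProjection P := ⟨hP2, hP⟩
  set Y := P * L * (1 - P) + (1 - P) * L * P
  set X := β • (P * L * P) + α • ((1 - P) * L * (1 - P))
  have hXsa : IsSelfAdjoint X :=
    ((IsSelfAdjoint.all β).smul (hL.conjugate_self hPp.isSelfAdjoint)).add
      ((IsSelfAdjoint.all α).smul (hL.conjugate_self hPp.one_sub.isSelfAdjoint))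
  have hYsa : IsSelfAdjoint Y :=
    hL.mul_mul_add_mul_mul hPp.isSelfAdjoint hPp.one_sub.isSelfAdjoint
  set D := blockScalar P √β √α
  have hD : IsUnit D := hPp.isIdempotentElem.isUnit_blockScalar
    (Real.sqrt_pos.mpr hβ).ne'.isUnit (Real.sqrt_pos.mpr hα).ne'.isUnit
  have hDLD : D * L * D = X + √(α * β) • Y := by
    rw [blockScalar_mul_mul_blockScalar, Real.mul_self_sqrt hβ.le, Real.mul_self_sqrt hα.le,
      ← Real.sqrt_mul hβ.le, mul_comm β]
  have hnorm : ‖√(α * β) • Y‖ ^ 2 < (α * β) ^ 2 := by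
    rw [norm_smul, mul_pow, Real.norm_of_nonneg (Real.sqrt_nonneg _),
      Real.sq_sqrt (mul_pos hα hβ).le, sq (α * β)]
    exact mul_lt_mul_of_pos_left hY (mul_pos hα hβ)
  have hunit : IsUnit (D * L * D) := hDLD ▸ hXsa.isUnit_add_of_algebraMap_le_sq
    ((IsSelfAdjoint.all _).smul hYsa)
    (hPp.isIdempotentElem.algebraMap_le_sq_smul_add_smul h1 h2) hnorm
  exact (Units.isUnit_units_mul hD.unit _).mp ((Units.isUnit_mul_units _ hD.unit).mp hunit)
end

section
/- Let A be a unital C*-algebra and let f : ℝ → ℝ be the bounded transform f(x) = x(1 + x²)^{−1/2}. There exists a constant C > 0 such that for all self-adjoint S, T ∈ A one has ‖f(S) − f(T)‖ ≤ C ‖S − T‖, where f(S), f(T) are defined by the continuous functional calculus. -/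
/-!
The bounded transform has the norm-convergent integral representation
`x (1 + x²)^(-1/2) = (2/π) ∫₀^∞ x (1 + t² + x²)⁻¹ dt`, which the continuous functional calculus
carries over to self-adjoint elements. For `c > 0` the integrand satisfies the resolvent identity
`S (c + S²)⁻¹ - T (c + T²)⁻¹ = c (c + S²)⁻¹ (S - T) (c + T²)⁻¹ + S (c + S²)⁻¹ (T - S) T (c + T²)⁻¹`,
and `‖(c + S²)⁻¹‖ ≤ 1/c`, `‖S (c + S²)⁻¹‖ ≤ 1/(2√c)` bound its norm by `(5/4) c⁻¹ ‖S - T‖`.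
Integrating against `c = 1 + t²` gives the Lipschitz constant `5/4`.
-/

open MeasureTheory Real Set Filter Topology

namespace BoundedTransform

theorem integral_Ioi_inv_add_sq {b : ℝ} (hb : 0 < b) :
    ∫ t in Ioi (0 : ℝ), (b + t ^ 2)⁻¹ = π / (2 * √b) := by
  have hs : 0 < √b := sqrt_pos.2 hb
  have hderiv (t : ℝ) : HasDerivAt (fun t => arctan (t / √b) / √b) (b + t ^ 2)⁻¹ t := by
    refine (((hasDerivAt_id t).div_const √b).arctan.div_const √b).congr_deriv ?_
    field_simp
    rw [id, sq_sqrt hb.le]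
  have hlim : Tendsto (fun t => arctan (t / √b) / √b) atTop (𝓝 (π / 2 / √b)) :=
    ((tendsto_arctan_atTop.mono_right nhdsWithin_le_nhds).comp
      (tendsto_id.atTop_div_const hs)).div_const _
  rw [integral_Ioi_of_hasDerivAt_of_nonneg' (fun t _ => hderiv t) (fun t _ => by positivity) hlim]
  simp only [zero_div, arctan_zero, sub_zero]
  field_simp

theorem integral_mul_inv_one_add_sq_add_sq (x : ℝ) :
    ∫ t in Ioi (0 : ℝ), x * ((1 + t ^ 2) + x ^ 2)⁻¹ =
      π / 2 * (x * (1 + x ^ 2) ^ (-(1 / 2 : ℝ))) := by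
  have hx : 0 < 1 + x ^ 2 := by positivity
  simp_rw [show ∀ t : ℝ, (1 + t ^ 2) + x ^ 2 = (1 + x ^ 2) + t ^ 2 from fun t => by ring]
  rw [integral_const_mul, integral_Ioi_inv_add_sq hx, rpow_neg hx.le, ← sqrt_eq_rpow]
  field_simp

section CStarAlgebra

variable {A : Type*} [CStarAlgebra A] {c : ℝ} {a : A}

noncomputable def sqResolvent (c : ℝ) (a : A) : A := cfc (fun x : ℝ => (c + x ^ 2)⁻¹) a

noncomputable def mulSqResolvent (c : ℝ) (a : A) : A := cfc (fun x : ℝ => x * (c + x ^ 2)⁻¹) a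

theorem continuous_inv_add_sq (hc : 0 < c) : Continuous fun x : ℝ => (c + x ^ 2)⁻¹ :=
  continuous_const.add (continuous_pow 2) |>.inv₀ fun x =>
    (add_pos_of_pos_of_nonneg hc (sq_nonneg x)).ne'

theorem sqResolvent_mul (hc : 0 < c) (ha : IsSelfAdjoint a) :
    sqResolvent c a * (algebraMap ℝ A c + a ^ 2) = 1 := by
  rw [sqResolvent, ← cfc_pow_id (R := ℝ) a 2, ← cfc_const_add c (fun x : ℝ => x ^ 2) a,
    ← cfc_mul _ _ a (continuous_inv_add_sq hc).continuousOn]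
  exact (cfc_congr fun x _ => inv_mul_cancel₀ (add_pos_of_pos_of_nonneg hc (sq_nonneg x)).ne').trans
    (cfc_const_one ℝ a)

theorem mul_sqResolvent (hc : 0 < c) (ha : IsSelfAdjoint a) :
    (algebraMap ℝ A c + a ^ 2) * sqResolvent c a = 1 := by
  rw [sqResolvent, ← cfc_pow_id (R := ℝ) a 2, ← cfc_const_add c (fun x : ℝ => x ^ 2) a,
    ← cfc_mul _ _ a (by fun_prop) (continuous_inv_add_sq hc).continuousOn]
  exact (cfc_congr fun x _ => mul_inv_cancel₀ (add_pos_of_pos_of_nonneg hc (sq_nonneg x)).ne').trans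
    (cfc_const_one ℝ a)

theorem mulSqResolvent_eq_mul_sqResolvent (hc : 0 < c) (ha : IsSelfAdjoint a) :
    mulSqResolvent c a = a * sqResolvent c a := by
  rw [mulSqResolvent, sqResolvent,
    cfc_mul _ _ a (by fun_prop) (continuous_inv_add_sq hc).continuousOn, cfc_id' ℝ a]

theorem mulSqResolvent_eq_sqResolvent_mul (hc : 0 < c) (ha : IsSelfAdjoint a) :
    mulSqResolvent c a = sqResolvent c a * a := by
  simp_rw [mulSqResolvent, sqResolvent, mul_comm _ (_ + _)⁻¹]
  rw [cfc_mul _ _ a (continuous_inv_add_sq hc).continuousOn (by fun_prop), cfc_id' ℝ a]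

theorem norm_sqResolvent_le (hc : 0 < c) : ‖sqResolvent c a‖ ≤ c⁻¹ :=
  norm_cfc_le (inv_nonneg.2 hc.le) fun x _ => by
    have h : 0 < c + x ^ 2 := add_pos_of_pos_of_nonneg hc (sq_nonneg x)
    rw [norm_inv, norm_of_nonneg h.le]
    exact inv_anti₀ hc (by nlinarith)

theorem norm_mulSqResolvent_le (hc : 0 < c) : ‖mulSqResolvent c a‖ ≤ (2 * √c)⁻¹ :=
  norm_cfc_le (by positivity) fun x _ => by
    have h : 0 < c + x ^ 2 := add_pos_of_pos_of_nonneg hc (sq_nonneg x)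
    rw [norm_mul, norm_inv, norm_of_nonneg h.le, ← div_eq_mul_inv, div_le_iff₀ h, inv_mul_eq_div,
      le_div_iff₀ (by positivity), norm_eq_abs]
    nlinarith [sq_nonneg (√c - |x|), sq_sqrt hc.le, sq_abs x]

theorem mulSqResolvent_sub_mulSqResolvent (hc : 0 < c) {S T : A} (hS : IsSelfAdjoint S)
    (hT : IsSelfAdjoint T) :
    mulSqResolvent c S - mulSqResolvent c T =
      c • (sqResolvent c S * (S - T) * sqResolvent c T) +
        mulSqResolvent c S * (T - S) * mulSqResolvent c T := by
  set R := sqResolvent c S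
  set R' := sqResolvent c T
  have hS' : mulSqResolvent c S = R * (S * (algebraMap ℝ A c + T ^ 2)) * R' := by
    rw [mul_assoc, mul_assoc, mul_sqResolvent hc hT, mul_one,
      mulSqResolvent_eq_sqResolvent_mul hc hS]
  have hT' : mulSqResolvent c T = R * ((algebraMap ℝ A c + S ^ 2) * T) * R' := by
    rw [← mul_assoc R, sqResolvent_mul hc hS, one_mul, mulSqResolvent_eq_mul_sqResolvent hc hT]
  calc mulSqResolvent c S - mulSqResolvent c T
      = R * (S * (algebraMap ℝ A c + T ^ 2) - (algebraMap ℝ A c + S ^ 2) * T) * R' := by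
        rw [mul_sub, sub_mul, hS', hT']
    _ = R * (c • (S - T) + S * (T - S) * T) * R' := by
        simp only [Algebra.algebraMap_eq_smul_one, mul_add, add_mul, mul_sub, sub_mul, smul_sub,
          mul_smul_comm, smul_mul_assoc, mul_one, one_mul, mul_assoc, pow_two]
        abel
    _ = c • (R * (S - T) * R') + R * S * (T - S) * (T * R') := by
        simp only [mul_add, add_mul, mul_smul_comm, smul_mul_assoc, mul_assoc]
    _ = _ := by
        rw [mulSqResolvent_eq_sqResolvent_mul hc hS, mulSqResolvent_eq_mul_sqResolvent hc hT]

theorem norm_mulSqResolvent_sub_le (hc : 0 < c) {S T : A} (hS : IsSelfAdjoint S)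
    (hT : IsSelfAdjoint T) :
    ‖mulSqResolvent c S - mulSqResolvent c T‖ ≤ 5 / 4 * c⁻¹ * ‖S - T‖ := by
  have hs : 0 < √c := sqrt_pos.2 hc
  rw [mulSqResolvent_sub_mulSqResolvent hc hS hT]
  calc _ ≤ c * (‖sqResolvent c S‖ * ‖S - T‖ * ‖sqResolvent c T‖) +
        ‖mulSqResolvent c S‖ * ‖T - S‖ * ‖mulSqResolvent c T‖ := by
        refine (norm_add_le _ _).trans (add_le_add ?_ norm_mul₃_le)
        rw [norm_smul, norm_of_nonneg hc.le]
        gcongr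
        exact norm_mul₃_le
    _ ≤ c * (c⁻¹ * ‖S - T‖ * c⁻¹) + (2 * √c)⁻¹ * ‖S - T‖ * (2 * √c)⁻¹ := by
        rw [norm_sub_rev T S]
        gcongr
        exacts [norm_sqResolvent_le hc, norm_sqResolvent_le hc, norm_mulSqResolvent_le hc,
          norm_mulSqResolvent_le hc]
    _ = 5 / 4 * c⁻¹ * ‖S - T‖ := by
        field_simp
        rw [sq_sqrt hc.le]
        ring

-- `‖a‖ * ‖1‖` rather than `‖a‖` bounds the spectrum: `A` may be trivial, so not `NormOneClass`.
theorem norm_mul_inv_one_add_sq_add_sq_le_of_mem_spectrum (t : ℝ) {z : ℝ} (hz : z ∈ spectrum ℝ a) :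
    ‖z * ((1 + t ^ 2) + z ^ 2)⁻¹‖ ≤ ‖a‖ * ‖(1 : A)‖ * (1 + t ^ 2)⁻¹ := by
  have hr : ‖z‖ ≤ ‖a‖ * ‖(1 : A)‖ :=
    mem_closedBall_zero_iff.1 (spectrum.subset_closedBall_norm_mul a hz)
  rw [norm_mul, norm_inv, norm_of_nonneg (by positivity : (0 : ℝ) ≤ 1 + t ^ 2 + z ^ 2)]
  exact mul_le_mul hr (inv_anti₀ (by positivity) (by nlinarith)) (by positivity)
    ((norm_nonneg z).trans hr)

theorem integrableOn_mulSqResolvent (ha : IsSelfAdjoint a) :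
    IntegrableOn (fun t : ℝ => mulSqResolvent (1 + t ^ 2) a) (Ioi 0) :=
  integrableOn_cfc measurableSet_Ioi _ (fun t => ‖a‖ * ‖(1 : A)‖ * (1 + t ^ 2)⁻¹) a
    (by simp only [Function.uncurry_def]; fun_prop (disch := intros; positivity))
    (ae_of_all _ fun t _ => norm_mul_inv_one_add_sq_add_sq_le_of_mem_spectrum t)
    (integrable_inv_one_add_sq.const_mul _).integrableOn.hasFiniteIntegral

theorem cfc_boundedTransform_eq_integral (ha : IsSelfAdjoint a) :
    cfc (fun x : ℝ => x * (1 + x ^ 2) ^ (-(1 / 2 : ℝ))) a =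
      (2 / π) • ∫ t in Ioi (0 : ℝ), mulSqResolvent (1 + t ^ 2) a := by
  unfold mulSqResolvent
  rw [← cfc_setIntegral measurableSet_Ioi (fun t x => x * ((1 + t ^ 2) + x ^ 2)⁻¹)
    (fun t => ‖a‖ * ‖(1 : A)‖ * (1 + t ^ 2)⁻¹) a
    (by simp only [Function.uncurry_def]; fun_prop (disch := intros; positivity))
    (ae_of_all _ fun t _ => norm_mul_inv_one_add_sq_add_sq_le_of_mem_spectrum t)
    (integrable_inv_one_add_sq.const_mul _).integrableOn.hasFiniteIntegral]
  simp_rw [integral_mul_inv_one_add_sq_add_sq]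
  have hf : Continuous fun x : ℝ => x * (1 + x ^ 2) ^ (-(1 / 2 : ℝ)) :=
    continuous_id.mul <| (continuous_const.add (continuous_pow 2)).rpow_const
      fun x => Or.inl (add_pos_of_pos_of_nonneg one_pos (sq_nonneg x)).ne'
  rw [cfc_const_mul _ _ a hf.continuousOn, smul_smul,
    div_mul_div_cancel₀ pi_ne_zero, div_self two_ne_zero, one_smul]

end CStarAlgebra

end BoundedTransform

open BoundedTransform in
/-- Lipschitz estimate for the bounded transform `f(x) = x(1 + x²)^{−1/2}` under the
continuous functional calculus: there is a constant `C > 0` such that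
`‖f(S) − f(T)‖ ≤ C‖S − T‖` for all self-adjoint `S, T` in a unital C*-algebra. -/
theorem boundedTransform_lipschitz (A : Type*) [CStarAlgebra A] :
    ∃ C > (0 : ℝ), ∀ S T : A, IsSelfAdjoint S → IsSelfAdjoint T →
      ‖cfc (fun x : ℝ => x * (1 + x ^ 2) ^ (-(1 / 2 : ℝ))) S -
          cfc (fun x : ℝ => x * (1 + x ^ 2) ^ (-(1 / 2 : ℝ))) T‖ ≤ C * ‖S - T‖ := by
  refine ⟨5 / 4, by norm_num, fun S T hS hT => ?_⟩
  have hbound (t : ℝ) : ‖mulSqResolvent (1 + t ^ 2) S - mulSqResolvent (1 + t ^ 2) T‖ ≤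
      5 / 4 * (1 + t ^ 2)⁻¹ * ‖S - T‖ :=
    norm_mulSqResolvent_sub_le (by positivity) hS hT
  calc _ = 2 / π * ‖∫ t in Ioi (0 : ℝ),
        (mulSqResolvent (1 + t ^ 2) S - mulSqResolvent (1 + t ^ 2) T)‖ := by
        rw [cfc_boundedTransform_eq_integral hS, cfc_boundedTransform_eq_integral hT, ← smul_sub,
          ← integral_sub (integrableOn_mulSqResolvent hS) (integrableOn_mulSqResolvent hT),
          norm_smul, norm_of_nonneg (by positivity)]
    _ ≤ 2 / π * ∫ t in Ioi (0 : ℝ), 5 / 4 * (1 + t ^ 2)⁻¹ * ‖S - T‖ := by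
        gcongr
        exact norm_integral_le_of_norm_le
          ((integrable_inv_one_add_sq.const_mul _).mul_const _).integrableOn (ae_of_all _ hbound)
    _ = 5 / 4 * ‖S - T‖ := by
        rw [integral_mul_const, integral_const_mul, integral_Ioi_inv_one_add_sq, arctan_zero,
          sub_zero]
        field_simp
end

section
/- Let g : ℝ → ℂ be integrable with ∫ |ξ| |g(ξ)| dξ < ∞, and suppose the function f : ℝ → ℝ defined by f(x) = ∫_ℝ g(ξ) e^{iξx} dξ is real-valued (f is then bounded and continuous). Let A be a unital C*-algebra, D ∈ A self-adjoint and a ∈ A. Then ‖f(D)·a − a·f(D)‖ ≤ (∫_ℝ |ξ| |g(ξ)| dξ)·‖Da − aD‖, where f(D) is defined by the continuous functional calculus. -/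
/-!
By the functional calculus, `f(D) = ∫ g(ξ) exp(iξD) dξ`, so it suffices to bound the commutators
`[exp(iξD), a]`. Since `iD` is skew-adjoint, `U(s) = exp(isD)` is unitary, and the conjugate
`s ↦ U(s) a U(-s)` has derivative `U(s) [iD, a] U(-s)`, of norm `‖[D, a]‖`. The mean value
inequality then gives `‖[U(ξ), a]‖ = ‖U(ξ) a U(-ξ) - a‖ ≤ |ξ| ‖[D, a]‖`.
-/

open MeasureTheory NormedSpace

section ExpCommutator

variable {E : Type*} [NormedRing E] [NormedAlgebra ℝ E] [CompleteSpace E]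

theorem hasDerivAt_exp_smul_mul_mul_exp_smul_neg (u a : E) (t : ℝ) :
    HasDerivAt (fun s : ℝ => exp (s • u) * a * exp (s • -u))
      (exp (t • u) * (u * a - a * u) * exp (t • -u)) t := by
  refine (((hasDerivAt_exp_smul_const u t).mul_const a).mul
    (hasDerivAt_exp_smul_const' (-u) t)).congr_deriv ?_
  noncomm_ring

theorem exp_smul_neg_mul_exp_smul (u : E) (t : ℝ) : exp (t • -u) * exp (t • u) = 1 := by
  let _ : NormedAlgebra ℚ E := .restrictScalars ℚ ℝ E
  rw [smul_neg, ← exp_add_of_commute (Commute.refl (t • u)).neg_left, neg_add_cancel, exp_zero]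

variable [StarRing E] [StarModule ℝ E]

theorem exp_smul_mem_unitary [ContinuousStar E] {u : E} (hu : u ∈ skewAdjoint E) (t : ℝ) :
    exp (t • u) ∈ unitary E := by
  let _ : NormedAlgebra ℚ E := .restrictScalars ℚ ℝ E
  exact exp_mem_unitary_of_mem_skewAdjoint (skewAdjoint.smul_mem t hu)

theorem norm_exp_smul_mul_sub_mul_exp_smul_le [CStarRing E] {u : E} (hu : u ∈ skewAdjoint E)
    (a : E) (t : ℝ) : ‖exp (t • u) * a - a * exp (t • u)‖ ≤ |t| * ‖u * a - a * u‖ := by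
  set conj : ℝ → E := fun s => exp (s • u) * a * exp (s • -u)
  have hderiv_le (s : ℝ) :
      ‖exp (s • u) * (u * a - a * u) * exp (s • -u)‖ ≤ ‖u * a - a * u‖ := by
    rw [CStarRing.norm_mul_mem_unitary _ (exp_smul_mem_unitary (neg_mem hu) s),
      CStarRing.norm_mem_unitary_mul _ (exp_smul_mem_unitary hu s)]
  have hmvt : ‖conj t - conj 0‖ ≤ ‖u * a - a * u‖ * ‖t - 0‖ :=
    convex_univ.norm_image_sub_le_of_norm_hasDerivWithin_le
      (fun s _ => (hasDerivAt_exp_smul_mul_mul_exp_smul_neg u a s).hasDerivWithinAt)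
      (fun s _ => hderiv_le s) (Set.mem_univ 0) (Set.mem_univ t)
  have hcomm : exp (t • u) * a - a * exp (t • u) = (conj t - conj 0) * exp (t • u) := by
    simp only [conj, zero_smul, exp_zero, one_mul, mul_one, sub_mul, mul_assoc,
      exp_smul_neg_mul_exp_smul]
  rw [hcomm, CStarRing.norm_mul_mem_unitary _ (exp_smul_mem_unitary hu t)]
  simpa only [sub_zero, Real.norm_eq_abs, mul_comm] using hmvt

end ExpCommutator

theorem integral_mul_const_sub_const_mul {X A : Type*} [MeasurableSpace X] {μ : Measure X}
    [NormedRing A] [NormedAlgebra ℝ A] {F : X → A} (hF : Integrable F μ) (a : A) :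
    ∫ x, (F x * a - a * F x) ∂μ = (∫ x, F x ∂μ) * a - a * ∫ x, F x ∂μ := by
  rw [integral_sub (hF.mul_const a) (hF.const_mul a), integral_mul_const_of_integrable hF,
    integral_const_mul_of_integrable hF]

section FunctionalCalculus

open Complex

variable {A : Type*} [CStarAlgebra A] {D : A}

theorem cfc_const_mul_exp_I_mul (hD : IsStarNormal D) (c : ℂ) (ξ : ℝ) :
    cfc (fun z : ℂ => c * Complex.exp (I * ξ * z)) D = c • NormedSpace.exp (ξ • (I • D)) := by
  rw [cfc_const_mul _ _ _ (by fun_prop), cfc_comp_const_mul (I * ξ) Complex.exp D,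
    CFC.complex_exp_eq_normedSpace_exp, mul_comm, mul_smul, Complex.coe_smul]

theorem norm_exp_I_mul_of_mem_spectrum (hD : IsSelfAdjoint D) {z : ℂ} (hz : z ∈ spectrum ℂ D)
    (ξ : ℝ) : ‖Complex.exp (I * ξ * z)‖ = 1 := by
  rw [hD.mem_spectrum_eq_re hz, norm_exp]
  simp

theorem integrable_mkD_mul_exp_I_mul {g : ℝ → ℂ} (hg : Integrable g) (hD : IsSelfAdjoint D) :
    Integrable fun ξ : ℝ =>
      ContinuousMap.mkD ((spectrum ℂ D).domRestrict fun z => g ξ * Complex.exp (I * ξ * z)) 0 := by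
  set E : C(ℝ, C(spectrum ℂ D, ℂ)) := ContinuousMap.curry
    ⟨fun p : ℝ × spectrum ℂ D => Complex.exp (I * p.1 * p.2), by fun_prop⟩
  have hcont (ξ : ℝ) :
      ContinuousOn (fun z => g ξ * Complex.exp (I * ξ * z)) (spectrum ℂ D) := by
    fun_prop
  have hE : (fun ξ : ℝ => ContinuousMap.mkD
      ((spectrum ℂ D).domRestrict fun z => g ξ * Complex.exp (I * ξ * z)) 0) =
        fun ξ => g ξ • E ξ := by
    ext ξ z
    simp [ContinuousMap.mkD_apply_of_continuousOn (hcont ξ), E]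
  refine ⟨hE ▸ hg.aestronglyMeasurable.smul E.continuous.aestronglyMeasurable,
    ContinuousMap.hasFiniteIntegral_mkD_restrict_of_bound _ _ (.of_forall hcont) _
      hg.norm.hasFiniteIntegral (.of_forall fun ξ z hz => ?_)⟩
  rw [norm_mul, norm_exp_I_mul_of_mem_spectrum hD hz, mul_one]

theorem cfc_integral_mul_exp_I_mul {g : ℝ → ℂ} (hg : Integrable g) (hD : IsSelfAdjoint D) :
    cfc (fun z : ℂ => ∫ ξ : ℝ, g ξ * Complex.exp (I * ξ * z)) D =
      ∫ ξ : ℝ, g ξ • NormedSpace.exp (ξ • (I • D)) := by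
  rw [cfc_integral' _ D (.of_forall fun ξ => by fun_prop) (integrable_mkD_mul_exp_I_mul hg hD)]
  simp_rw [cfc_const_mul_exp_I_mul hD.isStarNormal]

theorem integrable_smul_exp_smul_I_smul {g : ℝ → ℂ} (hg : Integrable g) (hD : IsSelfAdjoint D) :
    Integrable fun ξ : ℝ => g ξ • NormedSpace.exp (ξ • (I • D)) := by
  simpa only [cfc_const_mul_exp_I_mul hD.isStarNormal]
    using integrable_cfc' _ D (integrable_mkD_mul_exp_I_mul hg hD)

theorem IsSelfAdjoint.norm_exp_smul_I_smul_mul_sub_le (hD : IsSelfAdjoint D) (a : A) (t : ℝ) :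
    ‖NormedSpace.exp (t • (I • D)) * a - a * NormedSpace.exp (t • (I • D))‖ ≤
      |t| * ‖D * a - a * D‖ := by
  have hskew : I • D ∈ skewAdjoint A := by
    rw [skewAdjoint.mem_iff, star_smul, hD.star_eq, star_def, conj_I, neg_smul]
  have hcomm : ‖(I • D) * a - a * (I • D)‖ = ‖D * a - a * D‖ := by
    rw [smul_mul_assoc, mul_smul_comm, ← smul_sub, norm_smul, norm_I, one_mul]
  exact hcomm ▸ norm_exp_smul_mul_sub_mul_exp_smul_le hskew a t

end FunctionalCalculus

/-- Fourier-transform commutator estimate: if `g : ℝ → ℂ` is integrable with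
`∫ |ξ|·|g(ξ)| dξ < ∞` and the real-valued function `f(x) = ∫ g(ξ) e^{iξx} dξ`, then
for any self-adjoint `D` and any `a` in a unital C*-algebra,
`‖[f(D), a]‖ ≤ (∫ |ξ|·|g(ξ)| dξ)·‖[D, a]‖`. -/
theorem fourier_comm_estimate (A : Type*) [CStarAlgebra A] (g : ℝ → ℂ)
    (hg : Integrable g) (hg' : Integrable fun ξ : ℝ => |ξ| * ‖g ξ‖)
    (f : ℝ → ℝ)
    (hf : ∀ x : ℝ, (f x : ℂ) = ∫ ξ : ℝ, g ξ * Complex.exp (Complex.I * ξ * x))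
    (D a : A) (hD : IsSelfAdjoint D) :
    ‖cfc f D * a - a * cfc f D‖ ≤ (∫ ξ : ℝ, |ξ| * ‖g ξ‖) * ‖D * a - a * D‖ := by
  set U : ℝ → A := fun ξ => exp (ξ • (Complex.I • D))
  have hrep : cfc f D = ∫ ξ, g ξ • U ξ := by
    rw [cfc_real_eq_complex f hD, ← cfc_integral_mul_exp_I_mul hg hD]
    refine cfc_congr fun z hz => ?_
    rw [hf, ← hD.mem_spectrum_eq_re hz]
  have hcomm : cfc f D * a - a * cfc f D = ∫ ξ, g ξ • (U ξ * a - a * U ξ) := by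
    rw [hrep, ← integral_mul_const_sub_const_mul (integrable_smul_exp_smul_I_smul hg hD)]
    simp_rw [smul_sub, smul_mul_assoc, mul_smul_comm, U]
  have hbound (ξ : ℝ) : ‖g ξ • (U ξ * a - a * U ξ)‖ ≤ |ξ| * ‖g ξ‖ * ‖D * a - a * D‖ := by
    rw [norm_smul, mul_comm |ξ|, mul_assoc]
    gcongr
    exact hD.norm_exp_smul_I_smul_mul_sub_le a ξ
  calc ‖cfc f D * a - a * cfc f D‖ = ‖∫ ξ, g ξ • (U ξ * a - a * U ξ)‖ := by rw [hcomm]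
    _ ≤ ∫ ξ, |ξ| * ‖g ξ‖ * ‖D * a - a * D‖ :=
      norm_integral_le_of_norm_le (hg'.mul_const _) (.of_forall hbound)
    _ = (∫ ξ, |ξ| * ‖g ξ‖) * ‖D * a - a * D‖ := integral_mul_const _ _
end
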